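/- Let q be an odd prime and e ≥ 1, and let χ be an even Dirichlet character modulo q^e (i.e., χ(−1) = 1). Then there exists a Dirichlet character ψ modulo q^e such that ψ² = χ and the conductor of ψ equals the conductor of χ. -/

import Mathlib

/-!
Let `χ₀` be the primitive character inducing `χ`; its level is the conductor `q ^ f`, and it is
again even. Since `q` is odd, `±1` are the only square roots of `1` modulo `q ^ f`, so `χ₀` is
trivial on the kernel of `u ↦ u²` on `(ℤ/q^fℤ)ˣ`. It therefore factors through the subgroup of
squares, and extending that character to all of `(ℤ/q^fℤ)ˣ` gives `ψ₀` with `ψ₀² = χ₀`. Any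
square root of a primitive character is primitive, so `ψ₀` lifted to level `q ^ e` works.
-/

theorem ZMod.eq_one_or_eq_neg_one_of_sq_eq_one {q f : ℕ} (hq : q.Prime) (hq2 : q ≠ 2)
    {x : ZMod (q ^ f)} (hx : x ^ 2 = 1) : x = 1 ∨ x = -1 := by
  rcases f.eq_zero_or_pos with rfl | hf
  · exact .inl (Subsingleton.elim (α := ZMod 1) _ _)
  have : NeZero (q ^ f) := NeZero.of_pos (pow_pos hq.pos f)
  have hprod : (x - 1) * (x + 1) = 0 := by linear_combination hx
  -- `x + 1 = (x - 1) + 2` and `q ∤ 2`, so `x - 1` and `x + 1` are not both non-units.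
  have hunit : IsUnit (x - 1) ∨ IsUnit (x + 1) := by
    obtain ⟨a, ha⟩ : ∃ a : ℕ, x - 1 = a := ⟨_, (ZMod.natCast_zmod_val _).symm⟩
    have ha' : x + 1 = ((a + 2 : ℕ) : ZMod (q ^ f)) := by push_cast; linear_combination ha
    rw [ha, ha', ZMod.isUnit_natCast_iff_not_dvd_pow hq hf,
      ZMod.isUnit_natCast_iff_not_dvd_pow hq hf, ← not_and_or]
    rintro ⟨h1, h2⟩
    exact hq2 ((Nat.prime_dvd_prime_iff_eq hq Nat.prime_two).mp ((Nat.dvd_add_right h1).mp h2))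
  rcases hunit with h | h
  · exact .inr (eq_neg_of_add_eq_zero_left ((h.mul_right_eq_zero).mp hprod))
  · exact .inl (sub_eq_zero.mp ((h.mul_left_eq_zero).mp hprod))

theorem MonoidHom.exists_sq_eq_of_forall_sq_eq_one {G M : Type*} [CommGroup G] [Finite G]
    [CommMonoid M] [HasEnoughRootsOfUnity M (Monoid.exponent G)]
    (u : G →* Mˣ) (hu : ∀ g : G, g ^ 2 = 1 → u g = 1) : ∃ h : G →* Mˣ, h ^ 2 = u := by
  let sq : G →* G := powMonoidHom 2
  -- `u` factors through `G ⧸ ker sq ≃* range sq`; extend the resulting character of `range sq`.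
  let v : sq.range →* Mˣ :=
    (QuotientGroup.lift sq.ker u fun g hg ↦ hu g hg).comp
      (QuotientGroup.quotientKerEquivRange sq).symm.toMonoidHom
  obtain ⟨h, hh⟩ := MonoidHom.domRestrict_surjective (M := M) sq.range v
  refine ⟨h, MonoidHom.ext fun g ↦ ?_⟩
  have hsymm :
      (QuotientGroup.quotientKerEquivRange sq).symm ⟨g ^ 2, g, rfl⟩ = (g : G ⧸ sq.ker) :=
    (MulEquiv.symm_apply_eq _).mpr rfl
  have key : h (g ^ 2) = v ⟨g ^ 2, g, rfl⟩ := DFunLike.congr_fun hh ⟨g ^ 2, g, rfl⟩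
  rw [MonoidHom.pow_apply, ← map_pow, key]
  simp only [v, MonoidHom.comp_apply, MulEquiv.coe_toMonoidHom, hsymm]
  rfl

namespace DirichletCharacter

variable {R : Type*} [CommRing R] {n : ℕ}

theorem even_changeLevel_iff {m : ℕ} (hm : n ∣ m) (χ : DirichletCharacter R n) :
    (changeLevel hm χ).Even ↔ χ.Even := by
  simpa [Even] using
    congrArg (· = 1) (changeLevel_eq_cast_of_dvd' χ hm (a := -1) isCoprime_one_left.neg_left)

theorem IsPrimitive.of_pow_eq {χ ψ : DirichletCharacter R n} {k : ℕ} (hχ : χ.IsPrimitive)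
    (h : ψ ^ k = χ) : ψ.IsPrimitive :=
  dvd_antisymm ψ.conductor_dvd_level <| calc
    n = (ψ ^ k).conductor := by rw [h, hχ]
    _ ∣ ψ.conductor := conductor_pow_dvd ψ k

theorem Even.exists_sq_eq {χ : DirichletCharacter ℂ n} [NeZero n] (hχ : χ.Even)
    (hn : ∀ x : ZMod n, x ^ 2 = 1 → x = 1 ∨ x = -1) :
    ∃ ψ : DirichletCharacter ℂ n, ψ ^ 2 = χ := by
  have : NeZero (Monoid.exponent (ZMod n)ˣ : ℂ) :=
    ⟨Nat.cast_ne_zero.mpr Monoid.exponent_ne_zero_of_finite⟩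
  obtain ⟨h, hh⟩ := χ.toUnitHom.exists_sq_eq_of_forall_sq_eq_one fun u hu ↦ by
    rcases hn u (by simpa using congrArg Units.val hu) with h | h
    · rw [show u = 1 from Units.ext h, map_one]
    · rw [show u = -1 from Units.ext (by simpa using h), hχ.toUnitHom_eval_neg_one]
  exact ⟨MulChar.mulEquivToUnitHom.symm h, by rw [← map_pow, MulEquiv.symm_apply_eq, hh]; rfl⟩

end DirichletCharacter

theorem square_root_of_even_character_general
    (q : ℕ) (hq : q.Prime) (hqodd : Odd q) (e : ℕ)
    (χ : DirichletCharacter ℂ (q ^ e)) (hχeven : χ (-1) = 1) :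
    ∃ ψ : DirichletCharacter ℂ (q ^ e),
      ψ * ψ = χ ∧ ψ.conductor = χ.conductor := by
  have : NeZero (q ^ e) := ⟨pow_ne_zero e hq.ne_zero⟩
  have : NeZero χ.conductor := ⟨χ.conductor_ne_zero⟩
  have hdvd := χ.conductor_dvd_level
  have hχ₀ : χ.primitiveCharacter.Even := by
    rwa [← DirichletCharacter.even_changeLevel_iff hdvd,
      DirichletCharacter.changeLevel_primitiveCharacter]
  have hsq : ∀ x : ZMod χ.conductor, x ^ 2 = 1 → x = 1 ∨ x = -1 := by
    obtain ⟨f, -, hf⟩ := (Nat.dvd_prime_pow hq).mp hdvd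
    rw [hf]
    exact fun x ↦ ZMod.eq_one_or_eq_neg_one_of_sq_eq_one hq (hqodd.ne_two_of_dvd_nat dvd_rfl)
  obtain ⟨ψ₀, hψ₀⟩ := hχ₀.exists_sq_eq hsq
  refine ⟨DirichletCharacter.changeLevel hdvd ψ₀, ?_, ?_⟩
  · rw [← pow_two, ← map_pow, hψ₀, DirichletCharacter.changeLevel_primitiveCharacter]
  · rw [DirichletCharacter.conductor_changeLevel,
      χ.primitiveCharacter_isPrimitive.of_pow_eq hψ₀]

theorem square_root_of_even_character
    (q : ℕ) (hq : q.Prime) (hqodd : Odd q) (e : ℕ) (he : 1 ≤ e)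
    (χ : DirichletCharacter ℂ (q ^ e)) (hχeven : χ (-1) = 1) :
    ∃ ψ : DirichletCharacter ℂ (q ^ e),
      ψ * ψ = χ ∧ ψ.conductor = χ.conductor :=
  square_root_of_even_character_general q hq hqodd e χ hχeven
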